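/- arXiv:2501.02596 — 3 statements merged into one kernel-verified Lean document; each statement's English description precedes it below -/
import Mathlib

section
/- For fixed p, q, k with p + q ≥ k, for all sufficiently large n, every intersecting family F ⊆ binomial([n],k) satisfies β_{p,q}(F) = 0. -/
/-- A family of finite sets is intersecting if any two members meet. -/
def Intersecting (F : Finset (Finset ℕ)) : Prop :=
  ∀ A ∈ F, ∀ B ∈ F, (A ∩ B).Nonempty

/-- `X` is a cover (transversal) of `F`: it meets every member. -/
def IsCover (F : Finset (Finset ℕ)) (X : Finset ℕ) : Prop :=
  ∀ A ∈ F, (X ∩ A).Nonempty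

/-- `X` is a minimal cover of `F`. -/
def IsMinCover (F : Finset (Finset ℕ)) (X : Finset ℕ) : Prop :=
  IsCover F X ∧ ∀ Y ⊂ X, ¬ IsCover F Y

/-- The covering number `τ(F)`: minimum size of a cover. -/
noncomputable def coverNum (F : Finset (Finset ℕ)) : ℕ :=
  sInf {m | ∃ X : Finset ℕ, X.card = m ∧ IsCover F X}

/-- `F(A, B̄)`: members of `F` containing `A` and disjoint from `B`. -/
def famAB (F : Finset (Finset ℕ)) (A B : Finset ℕ) : Finset (Finset ℕ) :=
  F.filter fun S => A ⊆ S ∧ Disjoint B S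

/-- The `(p,q)`-dömdödöm of `F` with ground set `[n]` (here `Finset.range n`):
the minimum of `|F(A, B̄)|` over disjoint `A, B ⊆ [n]` with `|A| = p`, `|B| = q`. -/
noncomputable def beta (n p q : ℕ) (F : Finset (Finset ℕ)) : ℕ :=
  sInf {m | ∃ A B : Finset ℕ, A ⊆ Finset.range n ∧ B ⊆ Finset.range n ∧
    Disjoint A B ∧ A.card = p ∧ B.card = q ∧ m = (famAB F A B).card}

/-!
If some set of at most `q` points meets every member of `F`, put it inside `B`: then no member
avoids `B`. Otherwise `τ(F) > q`, and branching on the elements of a member avoiding a partial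
transversal (Frankl's tree argument) gives `|F| ≤ k ^ (q + 1) * C(n, k - q - 1)`. As
`k - q - 1 < p`, the `p`-sets of `[n]` lying in some member number at most
`|F| * C(k, p) = O(n ^ (p - 1))`, so for large `n` some `p`-set `A` lies in no member of `F`.
-/

open Finset

lemma Nat.choose_le_choose_of_le_of_two_mul_le {n r s : ℕ} (hrs : r ≤ s) (hs : 2 * s ≤ n) :
    n.choose r ≤ n.choose s := by
  induction s, hrs using Nat.le_induction with
  | base => rfl
  | succ s hrs ih =>
    exact (ih (by omega)).trans (Nat.choose_le_succ_of_lt_half_left (by omega))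

lemma Nat.mul_choose_lt_choose {K n r p : ℕ} (hrp : r < p) (hn : K * p + 2 * p ≤ n) :
    K * n.choose r < n.choose p := by
  obtain ⟨s, rfl⟩ : ∃ s, p = s + 1 := ⟨p - 1, by omega⟩
  have hpos : 0 < n.choose s := Nat.choose_pos (by omega)
  have hrs : n.choose r ≤ n.choose s :=
    Nat.choose_le_choose_of_le_of_two_mul_le (by omega) (by omega)
  refine (Nat.mul_le_mul_left K hrs).trans_lt (Nat.lt_of_mul_lt_mul_right (a := s + 1) ?_)
  calc K * n.choose s * (s + 1) = n.choose s * (K * (s + 1)) := by ring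
    _ < n.choose s * (n - s) := Nat.mul_lt_mul_of_pos_left (by omega) hpos
    _ = n.choose (s + 1) * (s + 1) := (Nat.choose_succ_right_eq n s).symm

lemma exists_subset_card_eq_forall_not_subset {α : Type*} [DecidableEq α] {U : Finset α}
    {F : Finset (Finset α)} {k p : ℕ} (hF : ∀ S ∈ F, #S = k)
    (h : #F * k.choose p < (#U).choose p) :
    ∃ A ⊆ U, #A = p ∧ ∀ S ∈ F, ¬ A ⊆ S := by
  by_contra! hcontra
  have hsub : U.powersetCard p ⊆ F.biUnion (powersetCard p) := fun A hA => by
    obtain ⟨hAU, hAp⟩ := mem_powersetCard.1 hA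
    obtain ⟨S, hS, hAS⟩ := hcontra A hAU hAp
    exact mem_biUnion.2 ⟨S, hS, mem_powersetCard.2 ⟨hAS, hAp⟩⟩
  have : (#U).choose p ≤ #F * k.choose p :=
    calc (#U).choose p = #(U.powersetCard p) := (card_powersetCard p U).symm
      _ ≤ ∑ S ∈ F, #(S.powersetCard p) := (card_le_card hsub).trans card_biUnion_le
      _ = #F * k.choose p := by
        rw [sum_const_nat fun S hS => by rw [card_powersetCard, hF S hS]]
  omega

lemma exists_subset_range_disjoint_card_eq {n m : ℕ} {A : Finset ℕ} (hA : A ⊆ range n)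
    (hm : #A + m ≤ n) : ∃ B ⊆ range n, Disjoint A B ∧ #B = m := by
  obtain ⟨B, hB, hBm⟩ := exists_subset_card_eq (s := range n \ A) (n := m)
    (by rw [card_sdiff_of_subset hA, card_range]; omega)
  exact ⟨B, hB.trans sdiff_subset, (disjoint_sdiff.mono_right hB), hBm⟩

lemma Intersecting.exists_isCover_card_le {F : Finset (Finset ℕ)} {k : ℕ} (hI : Intersecting F)
    (hF : ∀ S ∈ F, #S = k) : ∃ X : Finset ℕ, #X ≤ k ∧ IsCover F X := by
  obtain rfl | ⟨S₀, hS₀⟩ := F.eq_empty_or_nonempty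
  · exact ⟨∅, by simp, fun A hA => absurd hA (notMem_empty A)⟩
  · exact ⟨S₀, (hF S₀ hS₀).le, fun A hA => hI S₀ hS₀ A hA⟩

section TreeBound

variable {n k q : ℕ} {F : Finset (Finset ℕ)}

lemma card_filter_superset_le_choose (hF : F ⊆ (range n).powersetCard k) (A : Finset ℕ) :
    #{S ∈ F | A ⊆ S} ≤ n.choose (k - #A) := by
  rw [← card_range n, ← card_powersetCard]
  refine card_le_card_of_injOn (· \ A) (fun S hS => ?_) (fun S hS T hT hST => ?_)
  · obtain ⟨hSF, hAS⟩ := mem_filter.1 hS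
    obtain ⟨hSn, hSk⟩ := mem_powersetCard.1 (hF hSF)
    exact mem_powersetCard.2 ⟨sdiff_subset.trans hSn, by rw [card_sdiff_of_subset hAS, hSk]⟩
  · rw [← sdiff_union_of_subset (mem_filter.1 hS).2,
      ← sdiff_union_of_subset (mem_filter.1 hT).2]
    exact congrArg (· ∪ A) hST

lemma Intersecting.card_filter_superset_le_sum (hI : Intersecting F) {S₀ : Finset ℕ}
    (hS₀ : S₀ ∈ F) (A : Finset ℕ) : #{S ∈ F | A ⊆ S} ≤ ∑ x ∈ S₀, #{S ∈ F | insert x A ⊆ S} := by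
  refine (card_le_card fun S hS => ?_).trans card_biUnion_le
  obtain ⟨hSF, hAS⟩ := mem_filter.1 hS
  obtain ⟨x, hx⟩ := hI S₀ hS₀ S hSF
  obtain ⟨hxS₀, hxS⟩ := mem_inter.1 hx
  exact mem_biUnion.2 ⟨x, hxS₀, mem_filter.2 ⟨hSF, insert_subset hxS hAS⟩⟩

lemma Intersecting.card_filter_superset_le_of_not_isCover (hF : F ⊆ (range n).powersetCard k)
    (hI : Intersecting F) (hq : ∀ X : Finset ℕ, #X ≤ q → ¬ IsCover F X) {A : Finset ℕ}
    (hA : #A ≤ q + 1) : #{S ∈ F | A ⊆ S} ≤ k ^ (q + 1 - #A) * n.choose (k - (q + 1)) := by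
  obtain ⟨j, hj⟩ : ∃ j, j = q + 1 - #A := ⟨_, rfl⟩
  induction j generalizing A with
  | zero =>
    rw [← hj, pow_zero, one_mul, show q + 1 = #A by omega]
    exact card_filter_superset_le_choose hF A
  | succ j ih =>
    obtain ⟨S₀, hS₀, hS₀A⟩ : ∃ S₀ ∈ F, ¬ (A ∩ S₀).Nonempty := by
      simpa [IsCover] using hq A (by omega)
    have hS₀k : #S₀ = k := (mem_powersetCard.1 (hF hS₀)).2
    have hinsert : ∀ x ∈ S₀, #(insert x A) = #A + 1 := fun x hx =>
      card_insert_of_notMem fun hxA => hS₀A ⟨x, mem_inter.2 ⟨hxA, hx⟩⟩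
    calc #{S ∈ F | A ⊆ S} ≤ ∑ x ∈ S₀, #{S ∈ F | insert x A ⊆ S} :=
          hI.card_filter_superset_le_sum hS₀ A
      _ ≤ ∑ _x ∈ S₀, k ^ j * n.choose (k - (q + 1)) := sum_le_sum fun x hx => by
          have hxA := hinsert x hx
          have := ih (A := insert x A) (by rw [hxA]; omega) (by rw [hxA]; omega)
          rwa [hxA, show q + 1 - (#A + 1) = j by omega] at this
      _ = k ^ (q + 1 - #A) * n.choose (k - (q + 1)) := by
          rw [sum_const, hS₀k, smul_eq_mul, ← hj, pow_succ]; ring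

end TreeBound

lemma beta_eq_zero_of_famAB_eq_empty {n p q : ℕ} {F : Finset (Finset ℕ)} {A B : Finset ℕ}
    (hA : A ⊆ range n) (hB : B ⊆ range n) (hAB : Disjoint A B) (hAp : #A = p) (hBq : #B = q)
    (hF : famAB F A B = ∅) : beta n p q F = 0 :=
  Nat.sInf_eq_zero.2 <| .inl ⟨A, B, hA, hB, hAB, hAp, hBq, by rw [hF, card_empty]⟩

lemma beta_eq_zero_of_isCover {n p q : ℕ} {F : Finset (Finset ℕ)} (hF : ∀ S ∈ F, S ⊆ range n)
    {X : Finset ℕ} (hX : IsCover F X) (hXq : #X ≤ q) (hn : p + q ≤ n) :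
    beta n p q F = 0 := by
  obtain ⟨B, hXB, hB, hBq⟩ :=
    exists_subsuperset_card_eq (inter_subset_right (s₁ := X) (s₂ := range n))
      ((card_le_card inter_subset_left).trans hXq) (by rw [card_range]; omega)
  obtain ⟨A, hA, hBA, hAp⟩ := exists_subset_range_disjoint_card_eq (m := p) hB (by omega)
  refine beta_eq_zero_of_famAB_eq_empty hA hB hBA.symm hAp hBq (filter_eq_empty_iff.2 ?_)
  rintro S hS ⟨-, hBS⟩
  obtain ⟨x, hx⟩ := hX S hS
  obtain ⟨hxX, hxS⟩ := mem_inter.1 hx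
  exact disjoint_left.1 hBS (hXB (mem_inter.2 ⟨hxX, hF S hS hxS⟩)) hxS

lemma beta_eq_zero_of_forall_not_subset {n p q : ℕ} {F : Finset (Finset ℕ)} {A : Finset ℕ}
    (hA : A ⊆ range n) (hAp : #A = p) (hAF : ∀ S ∈ F, ¬ A ⊆ S) (hn : p + q ≤ n) :
    beta n p q F = 0 := by
  obtain ⟨B, hB, hAB, hBq⟩ := exists_subset_range_disjoint_card_eq (m := q) hA (by omega)
  exact beta_eq_zero_of_famAB_eq_empty hA hB hAB hAp hBq
    (filter_eq_empty_iff.2 fun S hS hS' => hAF S hS hS'.1)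

/-- If p + q ≥ k, then for all large n every intersecting F ⊆ binom([n],k)
has β_{p,q}(F) = 0. -/
theorem beta_eq_zero_of_large_pq (p q k : ℕ) (h : k ≤ p + q) :
    ∃ n₀ : ℕ, ∀ n ≥ n₀, ∀ F : Finset (Finset ℕ),
      F ⊆ (Finset.range n).powersetCard k → Intersecting F →
      beta n p q F = 0 := by
  refine ⟨k ^ (q + 1) * k.choose p * p + 2 * p + q, fun n hn F hF hI => ?_⟩
  have hFn : ∀ S ∈ F, S ⊆ range n ∧ #S = k := fun S hS => mem_powersetCard.1 (hF hS)
  by_cases hcov : ∃ X : Finset ℕ, #X ≤ q ∧ IsCover F X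
  · obtain ⟨X, hXq, hX⟩ := hcov
    exact beta_eq_zero_of_isCover (fun S hS => (hFn S hS).1) hX hXq (by omega)
  have hq : ∀ X : Finset ℕ, #X ≤ q → ¬ IsCover F X := fun X hXq hX => hcov ⟨X, hXq, hX⟩
  have hqk : q < k := by
    obtain ⟨X, hXk, hX⟩ := hI.exists_isCover_card_le fun S hS => (hFn S hS).2
    by_contra! hkq
    exact hq X (hXk.trans hkq) hX
  have hFcard : #F ≤ k ^ (q + 1) * n.choose (k - (q + 1)) := by
    simpa using hI.card_filter_superset_le_of_not_isCover hF hq (A := ∅) (by simp)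
  have hfree : #F * k.choose p < (#(range n)).choose p :=
    calc #F * k.choose p ≤ k ^ (q + 1) * n.choose (k - (q + 1)) * k.choose p :=
          Nat.mul_le_mul_right _ hFcard
      _ = k ^ (q + 1) * k.choose p * n.choose (k - (q + 1)) := by ring
      _ < (#(range n)).choose p := by
          rw [card_range]; exact Nat.mul_choose_lt_choose (by omega) (by omega)
  obtain ⟨A, hA, hAp, hAF⟩ :=
    exists_subset_card_eq_forall_not_subset (fun S hS => (hFn S hS).2) hfree
  exact beta_eq_zero_of_forall_not_subset hA hAp hAF (by omega)
end

section
/- Let T be a (q+1)-uniform intersecting family with covering number τ(T) = q+1, and let k > p + q. Define F = {T ∪ G : T ∈ T, G ⊆ [n] \ T, |G| = k - q - 1}. Then for n ≥ k + q, F is intersecting and β_{p,q}(F) ≥ binomial(n - p - 2q - 1, k - p - q - 1). -/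
open Finset

lemma Intersecting.of_forall_exists_subset {T F : Finset (Finset ℕ)} (hT : Intersecting T)
    (hF : ∀ S ∈ F, ∃ A ∈ T, A ⊆ S) : Intersecting F := by
  intro S₁ hS₁ S₂ hS₂
  obtain ⟨A₁, hA₁, hA₁S₁⟩ := hF S₁ hS₁
  obtain ⟨A₂, hA₂, hA₂S₂⟩ := hF S₂ hS₂
  exact (hT A₁ hA₁ A₂ hA₂).mono (inter_subset_inter hA₁S₁ hA₂S₂)

lemma exists_disjoint_of_card_lt_coverNum {T : Finset (Finset ℕ)} {B : Finset ℕ}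
    (hB : #B < coverNum T) : ∃ A ∈ T, Disjoint B A := by
  by_contra! h
  have hcover : IsCover T B := fun A hA => not_disjoint_iff_nonempty_inter.mp (h A hA)
  exact hB.not_ge (Nat.sInf_le ⟨B, rfl, hcover⟩)

lemma le_beta {n p q m : ℕ} {F : Finset (Finset ℕ)} (hpq : p + q ≤ n)
    (h : ∀ A B : Finset ℕ, A ⊆ range n → B ⊆ range n → Disjoint A B → #A = p → #B = q →
      m ≤ #(famAB F A B)) :
    m ≤ beta n p q F := by
  refine le_csInf ⟨_, range p, Ico p (p + q), range_subset_range.mpr (by omega),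
    fun x hx => mem_range.mpr (by grind), ?_, card_range p, by simp, rfl⟩ ?_
  · simpa only [range_eq_Ico] using Ico_disjoint_Ico_consecutive 0 p (p + q)
  · rintro m ⟨A, B, hA, hB, hAB, hAp, hBq, rfl⟩
    exact h A B hA hB hAB hAp hBq

/-- The `k`-subsets of `U` through `C` avoiding `B` are the sets `C ∪ G` with `G` a
`(k - |C|)`-subset of `U \ (C ∪ B)`. -/
lemma choose_le_card_famAB {F : Finset (Finset ℕ)} {U A B C : Finset ℕ} {k : ℕ}
    (hAC : A ⊆ C) (hCU : C ⊆ U) (hBU : B ⊆ U) (hBC : Disjoint B C) (hCk : #C ≤ k)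
    (hF : ∀ S ∈ U.powersetCard k, C ⊆ S → S ∈ F) :
    (#U - #C - #B).choose (k - #C) ≤ #(famAB F A B) := by
  have hcard : #(U \ (C ∪ B)) = #U - #C - #B := by
    rw [card_sdiff_of_subset (union_subset hCU hBU), card_union_of_disjoint hBC.symm]
    omega
  have hpieces : ∀ G ∈ (U \ (C ∪ B)).powersetCard (k - #C),
      G ⊆ U ∧ Disjoint C G ∧ Disjoint B G ∧ #G = k - #C := by
    intro G hG
    rw [mem_powersetCard, subset_sdiff, disjoint_union_right] at hG
    exact ⟨hG.1.1, hG.1.2.1.symm, hG.1.2.2.symm, hG.2⟩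
  rw [← hcard, ← card_powersetCard]
  refine card_le_card_of_injOn (C ∪ ·) (fun G hG => ?_) (fun G₁ hG₁ G₂ hG₂ hG => ?_)
  · obtain ⟨hGU, hCG, hBG, hGcard⟩ := hpieces G hG
    have hS : C ∪ G ∈ U.powersetCard k := by
      rw [mem_powersetCard, card_union_of_disjoint hCG, hGcard]
      exact ⟨union_subset hCU hGU, by omega⟩
    rw [mem_coe, famAB, mem_filter, disjoint_union_right]
    exact ⟨hF _ hS subset_union_left, hAC.trans subset_union_left, hBC, hBG⟩
  · rw [← union_sdiff_cancel_left (hpieces G₁ hG₁).2.1,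
      ← union_sdiff_cancel_left (hpieces G₂ hG₂).2.1]
    exact congrArg (· \ C) hG

lemma Nat.choose_sub_le_choose_sub {m k c c' : ℕ} (hc : c ≤ c') (hc' : c' ≤ k) (hk : k ≤ m) :
    (m - c').choose (k - c') ≤ (m - c).choose (k - c) := by
  obtain ⟨d, rfl⟩ := Nat.exists_eq_add_of_le hk
  rw [show k + d - c' = k - c' + d by omega, show k + d - c = k - c + d by omega,
    Nat.choose_symm_add, Nat.choose_symm_add]
  exact Nat.choose_le_choose d (by omega)

/-- Lower-bound construction: from a (q+1)-uniform intersecting family T with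
τ(T) = q+1 one builds a k-uniform intersecting family F (the k-sets in [n]
containing some member of T) with β_{p,q}(F) ≥ binom(n-p-2q-1, k-p-q-1). -/
theorem beta_lower_construction (n k p q : ℕ) (T : Finset (Finset ℕ))
    (hground : ∀ A ∈ T, A ⊆ Finset.range n)
    (hunif : ∀ A ∈ T, A.card = q + 1)
    (hint : Intersecting T)
    (htau : coverNum T = q + 1)
    (hk : p + q < k) (hn : k + q ≤ n) :
    Intersecting (((Finset.range n).powersetCard k).filter fun S => ∃ A ∈ T, A ⊆ S) ∧
    Nat.choose (n - p - 2 * q - 1) (k - p - q - 1) ≤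
      beta n p q (((Finset.range n).powersetCard k).filter fun S => ∃ A ∈ T, A ⊆ S) := by
  refine ⟨hint.of_forall_exists_subset fun S hS => (mem_filter.mp hS).2,
    le_beta (by omega) fun A B hA hB hAB hAp hBq => ?_⟩
  -- `B` is too small to cover `T`, so it misses some `T₀ ∈ T`; then every `k`-set containing
  -- `A ∪ T₀` and avoiding `B` lies in `F(A, B̄)`.
  obtain ⟨T₀, hT₀, hBT₀⟩ := exists_disjoint_of_card_lt_coverNum (show #B < coverNum T by omega)
  have hC : #(A ∪ T₀) ≤ p + q + 1 :=
    (card_union_le A T₀).trans (by rw [hAp, hunif T₀ hT₀, add_assoc])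
  calc (n - p - 2 * q - 1).choose (k - p - q - 1)
      = (n - q - (p + q + 1)).choose (k - (p + q + 1)) := by congr 1 <;> omega
    _ ≤ (n - q - #(A ∪ T₀)).choose (k - #(A ∪ T₀)) :=
      Nat.choose_sub_le_choose_sub hC (by omega) (by omega)
    _ = (#(range n) - #(A ∪ T₀) - #B).choose (k - #(A ∪ T₀)) := by
      rw [card_range, hBq]; congr 1; omega
    _ ≤ _ := choose_le_card_famAB subset_union_left (union_subset hA (hground T₀ hT₀)) hB
        (disjoint_union_right.mpr ⟨hAB.symm, hBT₀⟩) (by omega)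
        fun S hS hCS => mem_filter.mpr ⟨hS, T₀, hT₀, subset_union_right.trans hCS⟩
end

section
/- For fixed k ≥ p + 2 and all sufficiently large n, every intersecting family F ⊆ binomial([n],k) satisfies β_{p,1}(F) ≤ binomial(n - 3 - p, k - 2 - p). -/
/-!
If some point lies in every member of `F`, then `β_{p,1}(F) = 0`. If two 2-covers `{x, u}` and
`{x, v}` share a point (as when the minimal 2-covers form a triangle), every member avoiding `x`
contains `u`, `v` and `A`, so `|F(A, x̄)| ≤ C(n-3-p, k-2-p)` for any `p`-set `A` missing `x, u, v`.

Otherwise some point `x` has the property that every member avoiding `x` contains one of at most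
`k³` triples, found by branching over members of `F` that miss the part of the triple built so far
(if `{a, b}` is a 2-cover, take `x = a` and start every triple at `b`). Hence
`|F(x̄)| ≤ k³ C(n-4, k-3)`, and averaging over the `p`-subsets `A` of `[n] ∖ {x}` yields one with
`|F(A, x̄)| ≤ |F(x̄)| C(k, p) / C(n-1, p) = O(n^(k-3-p))`, below `C(n-3-p, k-2-p)` for large `n`.
-/

open Finset

section Counting

variable {α : Type*} [DecidableEq α]

theorem card_le_choose_of_forall_superset {s t : Finset α} {G : Finset (Finset α)} {k : ℕ}
    (hG : G ⊆ s.powersetCard k) (ht : ∀ S ∈ G, t ⊆ S) :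
    G.card ≤ (s.card - t.card).choose (k - t.card) := by
  rcases G.eq_empty_or_nonempty with rfl | ⟨S₀, hS₀⟩
  · exact Nat.zero_le _
  have hts : t ⊆ s := (ht S₀ hS₀).trans (mem_powersetCard.1 (hG hS₀)).1
  rw [← card_sdiff_of_subset hts, ← card_powersetCard]
  refine card_le_card_of_injOn (· \ t) (fun S hS => ?_) (fun S₁ h₁ S₂ h₂ h => ?_)
  · obtain ⟨hSs, hSk⟩ := mem_powersetCard.1 (hG hS)
    exact mem_powersetCard.2
      ⟨sdiff_subset_sdiff hSs le_rfl, by rw [card_sdiff_of_subset (ht S hS), hSk]⟩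
  · rw [← sdiff_union_of_subset (ht S₁ h₁), ← sdiff_union_of_subset (ht S₂ h₂)]
    exact congrArg (· ∪ t) h

theorem card_le_card_mul_choose_of_forall_exists_subset {s : Finset α}
    {G 𝒦 : Finset (Finset α)} {k r : ℕ} (hG : G ⊆ s.powersetCard k)
    (h𝒦 : ∀ K ∈ 𝒦, K.card = r) (hcov : ∀ S ∈ G, ∃ K ∈ 𝒦, K ⊆ S) :
    G.card ≤ 𝒦.card * (s.card - r).choose (k - r) :=
  calc G.card ≤ (𝒦.biUnion fun K => G.filter (K ⊆ ·)).card := card_le_card fun S hS => by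
        obtain ⟨K, hK, hKS⟩ := hcov S hS
        exact mem_biUnion.2 ⟨K, hK, mem_filter.2 ⟨hS, hKS⟩⟩
    _ ≤ ∑ K ∈ 𝒦, (G.filter (K ⊆ ·)).card := card_biUnion_le
    _ ≤ 𝒦.card * (s.card - r).choose (k - r) := by
        rw [← smul_eq_mul]
        refine sum_le_card_nsmul _ _ _ fun K hK => ?_
        rw [← h𝒦 K hK]
        exact card_le_choose_of_forall_superset ((filter_subset _ _).trans hG)
          fun S hS => (mem_filter.1 hS).2

theorem exists_choose_mul_card_filter_superset_le (s : Finset α) {G : Finset (Finset α)}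
    {k p : ℕ} (hG : ∀ S ∈ G, S.card = k) (hp : p ≤ s.card) :
    ∃ A ⊆ s, A.card = p ∧ s.card.choose p * (G.filter (A ⊆ ·)).card ≤ G.card * k.choose p := by
  obtain ⟨A, hA, hmin⟩ := (s.powersetCard p).exists_min_image (fun A => (G.filter (A ⊆ ·)).card)
    (powersetCard_nonempty.2 hp)
  obtain ⟨hAs, hAp⟩ := mem_powersetCard.1 hA
  refine ⟨A, hAs, hAp, ?_⟩
  have hbelow : ∀ S ∈ G, ((s.powersetCard p).bipartiteBelow (· ⊆ ·) S).card ≤ k.choose p :=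
    fun S hS => by
      rw [← hG S hS, ← card_powersetCard]
      exact card_le_card fun B hB => by
        obtain ⟨hB, hBS⟩ := (mem_bipartiteBelow _).1 hB
        exact mem_powersetCard.2 ⟨hBS, (mem_powersetCard.1 hB).2⟩
  simpa [card_powersetCard] using
    card_nsmul_le_card_nsmul (R := ℕ) (· ⊆ ·) (fun B hB => hmin B hB) hbelow

end Counting

section Covers

variable {F : Finset (Finset ℕ)}

theorem IsCover.mono {X Y : Finset ℕ} (hX : IsCover F X) (hXY : X ⊆ Y) : IsCover F Y :=
  fun A hA => (hX A hA).mono (inter_subset_inter_right hXY)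

theorem isCover_singleton {y : ℕ} : IsCover F {y} ↔ ∀ S ∈ F, y ∈ S := by
  simp [IsCover, Finset.Nonempty]

theorem isCover_pair {a b : ℕ} : IsCover F {a, b} ↔ ∀ S ∈ F, a ∈ S ∨ b ∈ S := by
  simp [IsCover, Finset.Nonempty]

theorem not_isCover_of_card_le_one (hF : ∀ y, ¬ IsCover F {y}) {Y : Finset ℕ}
    (hY : Y.card ≤ 1) : ¬ IsCover F Y := by
  obtain ⟨y, hy⟩ := card_le_one_iff_subset_singleton.1 hY
  exact fun hcov => hF y (hcov.mono hy)

theorem Intersecting.isCover (hF : Intersecting F) {S : Finset ℕ} (hS : S ∈ F) : IsCover F S :=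
  fun A hA => hF S hS A hA

theorem exists_kernel {H : Finset (Finset ℕ)} {k : ℕ} (hH : ∀ T ∈ H, T.card ≤ k) (r : ℕ)
    (hτ : ∀ Y : Finset ℕ, Y.card < r → ¬ IsCover H Y) :
    ∃ 𝒦 : Finset (Finset ℕ), 𝒦.card ≤ k ^ r ∧ (∀ K ∈ 𝒦, K.card = r) ∧
      ∀ S, IsCover H S → ∃ K ∈ 𝒦, K ⊆ S := by
  induction r with
  | zero => exact ⟨{∅}, by simp, by simp, fun S _ => ⟨∅, mem_singleton_self _, empty_subset S⟩⟩
  | succ r ih =>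
    -- no `K ∈ 𝒦` is a cover, so some `T ∈ H` misses it, and a cover `S ⊇ K` meets `T`
    obtain ⟨𝒦, h𝒦card, h𝒦r, h𝒦⟩ := ih fun Y hY => hτ Y (by omega)
    have hmiss : ∀ K ∈ 𝒦, ∃ T ∈ H, Disjoint K T := fun K hK => by
      have := hτ K (by rw [h𝒦r K hK]; omega)
      simpa [IsCover, not_nonempty_iff_eq_empty, disjoint_iff_inter_eq_empty] using this
    choose! T hTH hKT using hmiss
    refine ⟨𝒦.biUnion fun K => (T K).image (insert · K), ?_, ?_, ?_⟩
    · calc _ ≤ ∑ K ∈ 𝒦, ((T K).image (insert · K)).card := card_biUnion_le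
        _ ≤ 𝒦.card * k := by
          rw [← smul_eq_mul]
          exact sum_le_card_nsmul _ _ _ fun K hK => card_image_le.trans (hH _ (hTH K hK))
        _ ≤ k ^ (r + 1) := by rw [pow_succ]; exact Nat.mul_le_mul_right k h𝒦card
    · simp only [mem_biUnion, mem_image]
      rintro _ ⟨K, hK, y, hy, rfl⟩
      rw [card_insert_of_notMem (disjoint_right.1 (hKT K hK) hy), h𝒦r K hK]
    · intro S hS
      obtain ⟨K, hK, hKS⟩ := h𝒦 S hS
      obtain ⟨y, hy⟩ := hS (T K) (hTH K hK)
      obtain ⟨hyS, hyT⟩ := mem_inter.1 hy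
      exact ⟨insert y K, mem_biUnion.2 ⟨K, hK, mem_image_of_mem _ hyT⟩, insert_subset hyS hKS⟩

theorem exists_kernel_avoiding_of_isCover_pair {k a b : ℕ} (hF : ∀ S ∈ F, S.card ≤ k)
    (hint : Intersecting F) (hcov : IsCover F {a, b}) (hb : ¬ IsCover F {b})
    (hpat : ¬ ∃ x u v, u ≠ v ∧ ∀ S ∈ F, x ∉ S → u ∈ S ∧ v ∈ S) :
    ∃ 𝒦 : Finset (Finset ℕ), 𝒦.card ≤ k ^ 2 ∧ (∀ K ∈ 𝒦, K.card = 3) ∧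
      ∀ S ∈ F, a ∉ S → ∃ K ∈ 𝒦, K ⊆ S := by
  rw [isCover_pair] at hcov
  obtain ⟨T₀, hT₀, hbT₀⟩ : ∃ T ∈ F, b ∉ T := by simpa [isCover_singleton] using hb
  set H := (F.filter (b ∉ ·)).image (·.erase a)
  have hH : ∀ T ∈ H, T.card ≤ k := by
    simp only [H, mem_image, mem_filter]
    rintro _ ⟨T, ⟨hT, -⟩, rfl⟩
    exact card_erase_le.trans (hF T hT)
  have hτ : ∀ Y : Finset ℕ, Y.card < 2 → ¬ IsCover H Y := by
    refine fun Y hY => not_isCover_of_card_le_one (fun y hy => hpat ?_) (by omega)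
    have hyT : ∀ T ∈ F, b ∉ T → y ∈ T.erase a := fun T hT hbT =>
      isCover_singleton.1 hy _ (mem_image_of_mem _ (mem_filter.2 ⟨hT, hbT⟩))
    exact ⟨b, a, y, (ne_of_mem_erase (hyT T₀ hT₀ hbT₀)).symm, fun T hT hbT =>
      ⟨(hcov T hT).resolve_right hbT, mem_of_mem_erase (hyT T hT hbT)⟩⟩
  obtain ⟨𝒦, h𝒦card, h𝒦2, h𝒦⟩ := exists_kernel hH 2 hτ
  refine ⟨(𝒦.filter (b ∉ ·)).image (insert b),
    card_image_le.trans ((card_filter_le _ _).trans h𝒦card), ?_, fun S hS haS => ?_⟩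
  · simp only [mem_image, mem_filter]
    rintro _ ⟨K, ⟨hK, hbK⟩, rfl⟩
    rw [card_insert_of_notMem hbK, h𝒦2 K hK]
  -- `S` contains `b`, and meets each `T ∌ b` outside `{a, b}`
  have hSH : IsCover H (S.erase b) := by
    simp only [IsCover, H, mem_image, mem_filter]
    rintro _ ⟨T, ⟨hT, hbT⟩, rfl⟩
    obtain ⟨z, hz⟩ := hint S hS T hT
    obtain ⟨hzS, hzT⟩ := mem_inter.1 hz
    exact ⟨z, mem_inter.2 ⟨mem_erase.2 ⟨fun h => hbT (h ▸ hzT), hzS⟩,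
      mem_erase.2 ⟨fun h => haS (h ▸ hzS), hzT⟩⟩⟩
  obtain ⟨K, hK, hKS⟩ := h𝒦 _ hSH
  have hbK : b ∉ K := fun h => notMem_erase b S (hKS h)
  exact ⟨insert b K, mem_image_of_mem _ (mem_filter.2 ⟨hK, hbK⟩),
    insert_subset ((hcov S hS).resolve_left haS) (hKS.trans (erase_subset b S))⟩

theorem exists_point_kernel_avoiding {n k : ℕ} (hF : F ⊆ (range n).powersetCard k) (hn : 0 < n)
    (hint : Intersecting F) (hstar : ∀ y, ¬ IsCover F {y})
    (hpat : ¬ ∃ x u v, u ≠ v ∧ ∀ S ∈ F, x ∉ S → u ∈ S ∧ v ∈ S) :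
    ∃ x < n, ∃ 𝒦 : Finset (Finset ℕ), 𝒦.card ≤ k ^ 3 ∧ (∀ K ∈ 𝒦, K.card = 3) ∧
      ∀ S ∈ F, x ∉ S → ∃ K ∈ 𝒦, K ⊆ S := by
  have hFk : ∀ S ∈ F, S.card ≤ k := fun S hS => (mem_powersetCard.1 (hF hS)).2.le
  by_cases h2 : ∃ Y : Finset ℕ, Y.card ≤ 2 ∧ IsCover F Y
  · obtain ⟨Y, hY2, hY⟩ := h2
    have hY2 : Y.card = 2 := by
      by_contra h
      exact not_isCover_of_card_le_one hstar (by omega) hY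
    obtain ⟨a, b, -, rfl⟩ := card_eq_two.1 hY2
    obtain ⟨T₀, hT₀, hbT₀⟩ : ∃ T ∈ F, b ∉ T := by simpa [isCover_singleton] using hstar b
    have haT₀ : a ∈ T₀ := (isCover_pair.1 hY T₀ hT₀).resolve_right hbT₀
    obtain ⟨hT₀n, hT₀k⟩ := mem_powersetCard.1 (hF hT₀)
    have hk : 0 < k := hT₀k ▸ card_pos.2 ⟨a, haT₀⟩
    obtain ⟨𝒦, h𝒦card, h𝒦⟩ := exists_kernel_avoiding_of_isCover_pair hFk hint hY (hstar b) hpat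
    exact ⟨a, mem_range.1 (hT₀n haT₀), 𝒦,
      h𝒦card.trans (Nat.pow_le_pow_right hk (by norm_num)), h𝒦⟩
  · obtain ⟨𝒦, h𝒦card, h𝒦3, h𝒦⟩ :=
      exists_kernel hFk 3 fun Y hY hcov => h2 ⟨Y, by omega, hcov⟩
    exact ⟨0, hn, 𝒦, h𝒦card, h𝒦3, fun S hS _ => h𝒦 S (hint.isCover hS)⟩

end Covers

theorem choose_mul_lt_choose_mul {N k p M : ℕ} (hk : p + 2 ≤ k) (hk3 : 3 ≤ k)
    (hN : k + M * (k - 2) < N) :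
    M * (N - 3).choose (k - 3) < N.choose p * (N - 2 - p).choose (k - 2 - p) := by
  have hpos : 0 < (N - 3).choose (k - 3) := Nat.choose_pos (by omega)
  have hsucc : (N - 3).choose (k - 2) * (k - 2) = (N - 3).choose (k - 3) * (N - k) := by
    have := Nat.choose_succ_right_eq (N - 3) (k - 3)
    rwa [show k - 3 + 1 = k - 2 by omega, show N - 3 - (k - 3) = N - k by omega] at this
  have hlt : M * (N - 3).choose (k - 3) < (N - 3).choose (k - 2) := by
    refine Nat.lt_of_mul_lt_mul_right (a := k - 2) ?_
    rw [hsucc, mul_right_comm, mul_comm]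
    exact Nat.mul_lt_mul_of_pos_left (by omega) hpos
  calc M * (N - 3).choose (k - 3) < (N - 3).choose (k - 2) := hlt
    _ ≤ (N - 3).choose (k - 2) * (k - 2).choose p :=
        Nat.le_mul_of_pos_right _ (Nat.choose_pos (by omega))
    _ = (N - 3).choose p * (N - 3 - p).choose (k - 2 - p) := Nat.choose_mul (by omega)
    _ ≤ N.choose p * (N - 2 - p).choose (k - 2 - p) :=
        Nat.mul_le_mul (Nat.choose_le_choose _ (by omega)) (Nat.choose_le_choose _ (by omega))

section Beta

variable {n p k x : ℕ} {F : Finset (Finset ℕ)}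

theorem beta_le_card_famAB {A : Finset ℕ} (hA : A ⊆ range n) (hx : x < n) (hxA : x ∉ A)
    (hAp : A.card = p) : beta n p 1 F ≤ (famAB F A {x}).card :=
  Nat.sInf_le ⟨A, {x}, hA, by simpa using hx, disjoint_singleton_right.2 hxA, hAp,
    card_singleton x, rfl⟩

theorem exists_subset_range_disjoint (X : Finset ℕ) (h : p + X.card ≤ n) :
    ∃ A ⊆ range n, Disjoint A X ∧ A.card = p := by
  have := le_card_sdiff X (range n)
  rw [card_range] at this
  obtain ⟨A, hA, hAp⟩ := exists_subset_card_eq (s := range n \ X) (n := p) (by omega)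
  exact ⟨A, (subset_sdiff.1 hA).1, (subset_sdiff.1 hA).2, hAp⟩

theorem beta_le_of_forall_disjoint {X : Finset ℕ} {m : ℕ} (hx : x < n) (hxX : x ∈ X)
    (hX : p + X.card ≤ n) (h : ∀ A, Disjoint A X → A.card = p → (famAB F A {x}).card ≤ m) :
    beta n p 1 F ≤ m := by
  obtain ⟨A, hA, hAX, hAp⟩ := exists_subset_range_disjoint X hX
  exact (beta_le_card_famAB hA hx (disjoint_right.1 hAX hxX) hAp).trans (h A hAX hAp)

theorem famAB_singleton_eq (A : Finset ℕ) :
    famAB F A {x} = (F.filter (x ∉ ·)).filter (A ⊆ ·) := by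
  rw [famAB, filter_filter]
  exact filter_congr fun S _ => by rw [disjoint_singleton_left, and_comm]

theorem filter_notMem_subset_powersetCard (hF : F ⊆ (range n).powersetCard k) :
    F.filter (x ∉ ·) ⊆ (range n \ {x}).powersetCard k := fun S hS => by
  obtain ⟨hSF, hxS⟩ := mem_filter.1 hS
  obtain ⟨hSn, hSk⟩ := mem_powersetCard.1 (hF hSF)
  exact mem_powersetCard.2 ⟨subset_sdiff.2 ⟨hSn, disjoint_singleton_right.2 hxS⟩, hSk⟩

theorem beta_eq_zero_of_isCover_singleton {y : ℕ} (hF : F ⊆ (range n).powersetCard k)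
    (hn : p < n) (hy : IsCover F {y}) : beta n p 1 F = 0 := by
  obtain ⟨x, hx, hxF⟩ : ∃ x < n, ∀ S ∈ F, x ∈ S := by
    rcases F.eq_empty_or_nonempty with rfl | ⟨S, hS⟩
    · exact ⟨0, by omega, by simp⟩
    · rw [isCover_singleton] at hy
      exact ⟨y, mem_range.1 ((mem_powersetCard.1 (hF hS)).1 (hy S hS)), hy⟩
  refine Nat.le_zero.1 (beta_le_of_forall_disjoint hx (mem_singleton_self x) (by simpa) ?_)
  intro A _ _
  rw [famAB_singleton_eq, Nat.le_zero, card_eq_zero, filter_eq_empty_iff]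
  exact fun S hS => absurd (hxF S (mem_filter.1 hS).1) (mem_filter.1 hS).2

theorem beta_le_of_forall_notMem_imp_mem {u v : ℕ} (hF : F ⊆ (range n).powersetCard k)
    (hn : p + 3 ≤ n) (hu : ¬ IsCover F {u}) (huv : u ≠ v)
    (hforce : ∀ S ∈ F, x ∉ S → u ∈ S ∧ v ∈ S) :
    beta n p 1 F ≤ (n - 3 - p).choose (k - 2 - p) := by
  obtain ⟨S₀, hS₀, huS₀⟩ : ∃ S ∈ F, u ∉ S := by simpa [isCover_singleton] using hu
  have hx : x < n := by
    by_contra hxn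
    have hxS₀ : x ∉ S₀ := fun h => hxn (mem_range.1 ((mem_powersetCard.1 (hF hS₀)).1 h))
    exact huS₀ (hforce S₀ hS₀ hxS₀).1
  refine beta_le_of_forall_disjoint hx (X := {x, u, v}) (by simp)
    (by have := card_le_three (a := x) (b := u) (c := v); omega) fun A hAX hAp => ?_
  have huA : u ∉ A := disjoint_right.1 hAX (by simp)
  have hvA : v ∉ A := disjoint_right.1 hAX (by simp)
  have hcard : (insert u (insert v A)).card = p + 2 := by
    rw [card_insert_of_notMem (by simp [huv, huA]), card_insert_of_notMem hvA, hAp]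
  have hsx : (range n \ {x}).card = n - 1 := by
    rw [card_sdiff_of_subset (by simpa using hx), card_range, card_singleton]
  rw [famAB_singleton_eq]
  have := card_le_choose_of_forall_superset
    ((filter_subset (A ⊆ ·) _).trans (filter_notMem_subset_powersetCard hF))
    (t := insert u (insert v A)) fun S hS => by
      obtain ⟨hSx, hAS⟩ := mem_filter.1 hS
      obtain ⟨hSF, hxS⟩ := mem_filter.1 hSx
      obtain ⟨huS, hvS⟩ := hforce S hSF hxS
      exact insert_subset huS (insert_subset hvS hAS)
  rw [hsx, hcard] at this
  exact this.trans (le_of_eq (by congr 1 <;> omega))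

theorem beta_le_of_kernel {𝒦 : Finset (Finset ℕ)}
    (hF : F ⊆ (range n).powersetCard k) (hk : p + 2 ≤ k)
    (hn : k + 2 + k ^ 3 * k.choose p * (k - 2) ≤ n) (hx : x < n) (hxF : ¬ IsCover F {x})
    (h𝒦card : 𝒦.card ≤ k ^ 3) (h𝒦3 : ∀ K ∈ 𝒦, K.card = 3)
    (h𝒦 : ∀ S ∈ F, x ∉ S → ∃ K ∈ 𝒦, K ⊆ S) :
    beta n p 1 F ≤ (n - 3 - p).choose (k - 2 - p) := by
  set G := F.filter (x ∉ ·)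
  have hG : G ⊆ (range n \ {x}).powersetCard k := filter_notMem_subset_powersetCard hF
  have hsx : (range n \ {x}).card = n - 1 := by
    rw [card_sdiff_of_subset (by simpa using hx), card_range, card_singleton]
  have hk3 : 3 ≤ k := by
    obtain ⟨S, hS, hxS⟩ : ∃ S ∈ F, x ∉ S := by simpa [isCover_singleton] using hxF
    obtain ⟨K, hK, hKS⟩ := h𝒦 S hS hxS
    rw [← h𝒦3 K hK, ← (mem_powersetCard.1 (hF hS)).2]
    exact card_le_card hKS
  have hGcard : G.card ≤ k ^ 3 * (n - 1 - 3).choose (k - 3) := by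
    have := card_le_card_mul_choose_of_forall_exists_subset hG h𝒦3 fun S hS =>
      h𝒦 S (mem_filter.1 hS).1 (mem_filter.1 hS).2
    rw [hsx] at this
    exact this.trans (Nat.mul_le_mul_right _ h𝒦card)
  obtain ⟨A, hAs, hAp, hAvg⟩ := exists_choose_mul_card_filter_superset_le (range n \ {x})
    (fun S hS => (mem_powersetCard.1 (hG hS)).2) (by omega : p ≤ _)
  rw [hsx] at hAvg
  obtain ⟨hAn, hAx⟩ := subset_sdiff.1 hAs
  refine (beta_le_card_famAB hAn hx (disjoint_singleton_right.1 hAx) hAp).trans ?_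
  rw [famAB_singleton_eq]
  have key := choose_mul_lt_choose_mul (N := n - 1) (M := k ^ 3 * k.choose p) hk hk3 (by omega)
  refine (Nat.lt_of_mul_lt_mul_left (a := (n - 1).choose p) ?_).le
  calc _ ≤ G.card * k.choose p := hAvg
    _ ≤ k ^ 3 * (n - 1 - 3).choose (k - 3) * k.choose p := Nat.mul_le_mul_right _ hGcard
    _ = k ^ 3 * k.choose p * (n - 1 - 3).choose (k - 3) := by ring
    _ < _ := key
    _ = _ := by rw [show n - 1 - 2 - p = n - 3 - p by omega]

end Beta

/-- For k ≥ p + 2 and all large n, every intersecting F ⊆ binom([n],k) satisfies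
β_{p,1}(F) ≤ binom(n-3-p, k-2-p). -/
theorem beta_p_one_upper (p k : ℕ) (hk : p + 2 ≤ k) :
    ∃ n₀ : ℕ, ∀ n ≥ n₀, ∀ F : Finset (Finset ℕ),
      F ⊆ (Finset.range n).powersetCard k → Intersecting F →
      beta n p 1 F ≤ Nat.choose (n - 3 - p) (k - 2 - p) := by
  refine ⟨k + 2 + k ^ 3 * k.choose p * (k - 2), fun n hn F hF hint => ?_⟩
  by_cases hstar : ∃ y, IsCover F {y}
  · obtain ⟨y, hy⟩ := hstar
    exact (beta_eq_zero_of_isCover_singleton hF (by omega) hy).trans_le (Nat.zero_le _)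
  push Not at hstar
  by_cases hpat : ∃ x u v, u ≠ v ∧ ∀ S ∈ F, x ∉ S → u ∈ S ∧ v ∈ S
  · obtain ⟨x, u, v, huv, hforce⟩ := hpat
    exact beta_le_of_forall_notMem_imp_mem hF (by omega) (hstar u) huv hforce
  obtain ⟨x, hx, 𝒦, h𝒦card, h𝒦3, h𝒦⟩ :=
    exists_point_kernel_avoiding hF (by omega) hint hstar hpat
  exact beta_le_of_kernel hF hk hn hx (hstar x) h𝒦card h𝒦3 h𝒦
end
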